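/- Suppose the weight matrices of a linear STBC satisfy A_i A_jᴴ + A_j A_iᴴ = 0 for A_i, A_j in different groups. Then for any channel matrix H, the corresponding real columns h_i = vec(H A_i) and h_j = vec(H A_j) of the equivalent channel matrix are orthogonal. -/
import Mathlib


open Matrix

theorem equivalent_channel_columns_orthogonal
    (nt nr T : ℕ) (A₁ A₂ : Matrix (Fin nt) (Fin T) ℂ)
    (hA : A₁ * A₂ᴴ + A₂ * A₁ᴴ = 0)
    (H : Matrix (Fin nr) (Fin nt) ℂ) :
    (Matrix.trace (H * A₁ * (H * A₂)ᴴ)).re = 0 := by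
  have key : Matrix.trace (H * A₁ * (H * A₂)ᴴ) +
      star (Matrix.trace (H * A₁ * (H * A₂)ᴴ)) = 0 := by
    rw [← Matrix.trace_conjTranspose]
    have : (H * A₁ * (H * A₂)ᴴ)ᴴ = H * A₂ * (H * A₁)ᴴ := by
      simp [Matrix.conjTranspose_mul, Matrix.mul_assoc]
    rw [this, ← Matrix.trace_add]
    have : H * A₁ * (H * A₂)ᴴ + H * A₂ * (H * A₁)ᴴ
        = H * (A₁ * A₂ᴴ + A₂ * A₁ᴴ) * Hᴴ := by
      simp [Matrix.conjTranspose_mul, Matrix.mul_add, Matrix.add_mul,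
        Matrix.mul_assoc]
    rw [this, hA]
    simp
  have := congrArg Complex.re key
  simpa [Complex.add_re] using this
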